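/- arXiv:2603.12877 — 7 statements merged into one kernel-verified Lean document; each statement's English description precedes it below -/
import Mathlib

section
/- Let p > q > 1 be relatively prime integers and write p = m·q + r with 1 ≤ r ≤ q - 1. Let k ≥ 1 be an integer and let T : [0,1) → [0,1) be defined by T(x) = frac((p/q) · frac(k·q·x)). Then the probability measure on [0,1) with density f(x) = (p-r)/p · (1 + (q/(p-r)) · 1_{[0, r/q)}(x)) with respect to Lebesgue measure is T-invariant. -/
open MeasureTheory
open scoped ENNReal

/-! Write `T = S ∘ R` with `R x = fract (k q x)` and `S x = fract ((p/q) x)`, and let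
`μ = (p-r)/p · λ|[0,1) + q/p · λ|[0,r/q)`. Since `k q` is an integer, `R` maps `λ|[0,1)` to
itself and `λ|[0,r/q) = λ|[0, k r / (k q))` to `r/q · λ|[0,1)`, so `R_* μ = λ|[0,1)`. Conversely
`x ↦ (p/q) x` runs `m` times over `[0,1)` and then once over `[0, r/q)`, so `S_* λ|[0,1) = μ`.
Hence `T_* μ = S_* R_* μ = μ`. -/

theorem Real.map_volume_mul_add {c : ℝ} (hc : 0 < c) (d : ℝ) :
    Measure.map (fun x => c * x + d) volume = ENNReal.ofReal c⁻¹ • volume := by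
  have h : (fun x : ℝ => c * x + d) = (· + d) ∘ (c * ·) := rfl
  rw [h, ← Measure.map_map (measurable_add_const d) (measurable_const_mul c),
    Real.map_volume_mul_left hc.ne', Measure.map_smul, map_add_right_eq_self,
    abs_of_pos (inv_pos.2 hc)]

theorem map_fract_mul_restrict_Ico_of_le_of_le {c : ℝ} (hc : 0 < c) {j : ℤ} {u v : ℝ}
    (hu : j ≤ c * u) (hv : c * v ≤ j + 1) :
    Measure.map (fun x => Int.fract (c * x)) (volume.restrict (Set.Ico u v))
      = ENNReal.ofReal c⁻¹ • volume.restrict (Set.Ico (c * u - j) (c * v - j)) := by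
  have hfract : (fun x => Int.fract (c * x)) =ᵐ[volume.restrict (Set.Ico u v)]
      fun x => c * x + (-j : ℝ) := by
    filter_upwards [self_mem_ae_restrict measurableSet_Ico] with x ⟨hux, hxv⟩
    have hfloor : ⌊c * x⌋ = j := by
      rw [Int.floor_eq_iff]
      constructor <;> nlinarith
    rw [Int.fract, hfloor, sub_eq_add_neg]
  have hpre : (fun x => c * x + (-j : ℝ)) ⁻¹' Set.Ico (c * u - j) (c * v - j)
      = Set.Ico u v := by
    ext x
    simp only [Set.mem_preimage, Set.mem_Ico, ← sub_eq_add_neg, sub_le_sub_iff_right,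
      sub_lt_sub_iff_right, mul_le_mul_iff_right₀ hc, mul_lt_mul_iff_right₀ hc]
  rw [Measure.map_congr hfract, ← hpre, ← Measure.restrict_map (by fun_prop) measurableSet_Ico,
    Real.map_volume_mul_add hc, Measure.restrict_smul]

theorem map_fract_mul_restrict_Ico_natCast_div {c : ℝ} (hc : 0 < c) (n : ℕ) :
    Measure.map (fun x => Int.fract (c * x)) (volume.restrict (Set.Ico 0 (n / c)))
      = ENNReal.ofReal (n / c) • volume.restrict (Set.Ico (0 : ℝ) 1) := by
  induction n with
  | zero => simp
  | succ n ih =>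
    have hsplit : Set.Ico (0 : ℝ) ((n + 1 : ℕ) / c)
        = Set.Ico 0 (n / c) ∪ Set.Ico (n / c) ((n + 1 : ℕ) / c) :=
      (Set.Ico_union_Ico_eq_Ico (by positivity) (by gcongr; simp)).symm
    have hlast := map_fract_mul_restrict_Ico_of_le_of_le hc (j := n) (u := n / c)
      (v := (n + 1 : ℕ) / c) (by rw [mul_div_cancel₀ _ hc.ne']; simp)
      (by rw [mul_div_cancel₀ _ hc.ne']; simp)
    have hbounds : Set.Ico (c * (n / c) - (n : ℤ)) (c * ((n + 1 : ℕ) / c) - (n : ℤ))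
        = Set.Ico 0 1 := by
      rw [mul_div_cancel₀ _ hc.ne', mul_div_cancel₀ _ hc.ne']
      push_cast
      ring_nf
    rw [hsplit, Measure.restrict_union Set.Ico_disjoint_Ico_same measurableSet_Ico,
      Measure.map_add _ _ (by fun_prop), ih, hlast, hbounds, ← add_smul,
      ← ENNReal.ofReal_add (by positivity) (by positivity)]
    push_cast
    ring_nf

theorem map_fract_mul_restrict_Ico_zero_one {c : ℝ} (hc : 0 < c) :
    Measure.map (fun x => Int.fract (c * x)) (volume.restrict (Set.Ico (0 : ℝ) 1))
      = ENNReal.ofReal (⌊c⌋₊ / c) • volume.restrict (Set.Ico (0 : ℝ) 1)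
        + ENNReal.ofReal c⁻¹ • volume.restrict (Set.Ico 0 (Int.fract c)) := by
  have hfloor : (⌊c⌋₊ : ℝ) = ⌊c⌋ := natCast_floor_eq_intCast_floor hc.le
  have hsplit : Set.Ico (0 : ℝ) 1 = Set.Ico 0 (⌊c⌋₊ / c) ∪ Set.Ico (⌊c⌋₊ / c) 1 :=
    (Set.Ico_union_Ico_eq_Ico (by positivity)
      ((div_le_one hc).2 (Nat.floor_le hc.le))).symm
  have hlast := map_fract_mul_restrict_Ico_of_le_of_le hc (j := ⌊c⌋) (u := ⌊c⌋₊ / c) (v := 1)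
    (by rw [mul_div_cancel₀ _ hc.ne', hfloor]) (by rw [mul_one]; exact (Int.lt_floor_add_one c).le)
  conv_lhs => rw [hsplit, Measure.restrict_union Set.Ico_disjoint_Ico_same measurableSet_Ico,
    Measure.map_add _ _ (by fun_prop), map_fract_mul_restrict_Ico_natCast_div hc, hlast,
    mul_div_cancel₀ _ hc.ne', mul_one, ← Int.fract]
  rw [hfloor, sub_self]

theorem withDensity_ofReal_mul_one_add_indicator {α : Type*} [MeasurableSpace α]
    (μ : Measure α) {s : Set α} (hs : MeasurableSet s) {a b : ℝ} (ha : 0 ≤ a) (hb : 0 ≤ b) :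
    μ.withDensity (fun x => ENNReal.ofReal (a * (1 + b * s.indicator (fun _ => 1) x)))
      = ENNReal.ofReal a • μ + ENNReal.ofReal (a * b) • μ.restrict s := by
  have hdens : (fun x => ENNReal.ofReal (a * (1 + b * s.indicator (fun _ => 1) x)))
      = (fun _ => ENNReal.ofReal a) + s.indicator (fun _ => ENNReal.ofReal (a * b)) := by
    funext x
    by_cases hx : x ∈ s
    · simp only [Pi.add_apply, Set.indicator_of_mem hx, mul_one]
      rw [← ENNReal.ofReal_add ha (by positivity), mul_add, mul_one]
    · simp [Set.indicator_of_notMem hx]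
  rw [hdens, withDensity_add_left measurable_const, withDensity_const,
    withDensity_indicator hs, withDensity_const]

noncomputable def invariantMeasure (p q r : ℝ) : Measure ℝ :=
  ENNReal.ofReal ((p - r) / p) • volume.restrict (Set.Ico 0 1)
    + ENNReal.ofReal (q / p) • volume.restrict (Set.Ico 0 (r / q))

theorem map_fract_intCast_div_mul_restrict_Ico_zero_one {p q m r : ℤ} (hq : 0 < q) (hp : 0 < p)
    (hdiv : p = m * q + r) (hr : 0 ≤ r) (hrq : r < q) :
    Measure.map (fun x => Int.fract ((p / q : ℝ) * x)) (volume.restrict (Set.Ico (0 : ℝ) 1))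
      = invariantMeasure p q r := by
  have hqR : (0 : ℝ) < q := by exact_mod_cast hq
  have hdivR : (p / q : ℝ) = m + r / q := by
    rw [show (p : ℝ) = m * q + r by exact_mod_cast hdiv]
    field_simp
  have hrq1 : (r / q : ℝ) < 1 := (div_lt_one hqR).2 (by exact_mod_cast hrq)
  have hr0 : (0 : ℝ) ≤ r / q := div_nonneg (by exact_mod_cast hr) hqR.le
  have hfloor : ⌊(p / q : ℝ)⌋ = m := by
    rw [Int.floor_eq_iff, hdivR]
    constructor <;> linarith
  have hfract : Int.fract (p / q : ℝ) = r / q := by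
    rw [Int.fract, hfloor, hdivR, add_sub_cancel_left]
  have hnatFloor : (⌊(p / q : ℝ)⌋₊ : ℝ) = m := by
    rw [natCast_floor_eq_intCast_floor (by positivity), hfloor]
  rw [map_fract_mul_restrict_Ico_zero_one (by positivity), hfract, hnatFloor, inv_div,
    invariantMeasure]
  congr 3
  rw [show (p : ℝ) - r = m * q by push_cast [hdiv]; ring]
  field_simp

theorem map_fract_intCast_mul_invariantMeasure {k q p r : ℤ} (hk : 0 < k) (hq : 0 < q)
    (hr : 0 ≤ r) (hrp : r < p) :
    Measure.map (fun x => Int.fract ((k * q : ℝ) * x)) (invariantMeasure p q r)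
      = volume.restrict (Set.Ico (0 : ℝ) 1) := by
  lift k to ℕ using hk.le
  lift q to ℕ using hq.le
  lift r to ℕ using hr
  simp only [Int.cast_natCast] at *
  have hkR : (0 : ℝ) < k := by exact_mod_cast hk
  have hqR : (0 : ℝ) < q := by exact_mod_cast hq
  have hpR : (0 : ℝ) < p := by exact_mod_cast (show (0 : ℤ) < p by omega)
  have hrpR : (r : ℝ) ≤ p := by exact_mod_cast hrp.le
  have hIval : ((k * q : ℕ) : ℝ) / (k * q) = 1 := by
    rw [Nat.cast_mul, div_self (by positivity)]
  have hJval : ((k * r : ℕ) : ℝ) / (k * q) = r / q := by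
    rw [Nat.cast_mul, mul_div_mul_left _ _ hkR.ne']
  have hmass : ENNReal.ofReal ((p - r) / p) + ENNReal.ofReal (q / p) * ENNReal.ofReal (r / q)
      = 1 := by
    rw [← ENNReal.ofReal_mul (by positivity),
      ← ENNReal.ofReal_add (div_nonneg (by linarith) hpR.le) (by positivity),
      ← ENNReal.ofReal_one]
    congr 1
    field_simp
    ring
  rw [invariantMeasure, Measure.map_add _ _ (by fun_prop), Measure.map_smul, Measure.map_smul,
    ← hJval]
  nth_rewrite 1 [← congrArg (Set.Ico (0 : ℝ)) hIval]
  rw [map_fract_mul_restrict_Ico_natCast_div (by positivity),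
    map_fract_mul_restrict_Ico_natCast_div (by positivity), hIval, hJval, ENNReal.ofReal_one,
    one_smul, smul_smul, ← add_smul, hmass, one_smul]

theorem stmt_4_general (p q m r : ℤ) (hq : 1 < q) (hpq : q < p)
    (hdiv : p = m * q + r) (hr : 1 ≤ r) (hr' : r ≤ q - 1)
    (k : ℤ) (hk : 1 ≤ k)
    (T : ℝ → ℝ)
    (hT : ∀ x, T x = Int.fract (((p : ℝ) / (q : ℝ)) * Int.fract ((k : ℝ) * (q : ℝ) * x)))
    (f : ℝ → ℝ≥0∞)
    (hf : ∀ x, f x = ENNReal.ofReal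
      (((p : ℝ) - r) / p *
        (1 + ((q : ℝ) / ((p : ℝ) - r)) *
          Set.indicator (Set.Ico (0 : ℝ) ((r : ℝ) / q)) (fun _ => (1 : ℝ)) x)))
    (A : Set ℝ) (hA : MeasurableSet A) :
    ((volume.restrict (Set.Ico (0 : ℝ) 1)).withDensity f) (T ⁻¹' A)
      = ((volume.restrict (Set.Ico (0 : ℝ) 1)).withDensity f) A := by
  have hpR : (0 : ℝ) < p := by exact_mod_cast (show (0 : ℤ) < p by omega)
  have hprR : (0 : ℝ) < p - r := by
    rw [sub_pos]; exact_mod_cast (show r < p by omega)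
  have hμ : (volume.restrict (Set.Ico (0 : ℝ) 1)).withDensity f
      = invariantMeasure p q r := by
    have hJI : Set.Ico (0 : ℝ) (r / q) ⊆ Set.Ico 0 1 :=
      Set.Ico_subset_Ico_right ((div_le_one (by positivity)).2 (by exact_mod_cast (by omega)))
    rw [invariantMeasure, funext hf, withDensity_ofReal_mul_one_add_indicator _ measurableSet_Ico
      (by positivity) (by positivity), Measure.restrict_restrict measurableSet_Ico,
      Set.inter_eq_self_of_subset_left hJI, div_mul_div_cancel₀' hprR.ne']
  have hT_comp : T = (fun x => Int.fract ((p / q : ℝ) * x))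
      ∘ fun x => Int.fract ((k * q : ℝ) * x) := funext hT
  have hmap : Measure.map T ((volume.restrict (Set.Ico (0 : ℝ) 1)).withDensity f)
      = (volume.restrict (Set.Ico (0 : ℝ) 1)).withDensity f := by
    rw [hT_comp, ← Measure.map_map (by fun_prop) (by fun_prop), hμ,
      map_fract_intCast_mul_invariantMeasure (by omega) (by omega) (by omega) (by omega),
      map_fract_intCast_div_mul_restrict_Ico_zero_one (by omega) (by omega) hdiv (by omega)
        (by omega)]
  rw [← Measure.map_apply (by rw [hT_comp]; fun_prop) hA, hmap]

theorem stmt_4 (p q m r : ℤ) (hq : 1 < q) (hpq : q < p) (hcop : IsCoprime p q)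
    (hdiv : p = m * q + r) (hr : 1 ≤ r) (hr' : r ≤ q - 1)
    (k : ℤ) (hk : 1 ≤ k)
    (T : ℝ → ℝ)
    (hT : ∀ x, T x = Int.fract (((p : ℝ) / (q : ℝ)) * Int.fract ((k : ℝ) * (q : ℝ) * x)))
    (f : ℝ → ℝ≥0∞)
    (hf : ∀ x, f x = ENNReal.ofReal
      (((p : ℝ) - r) / p *
        (1 + ((q : ℝ) / ((p : ℝ) - r)) *
          Set.indicator (Set.Ico (0 : ℝ) ((r : ℝ) / q)) (fun _ => (1 : ℝ)) x)))
    (A : Set ℝ) (hA : MeasurableSet A) (hA1 : A ⊆ Set.Ico (0 : ℝ) 1) :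
    ((volume.restrict (Set.Ico (0 : ℝ) 1)).withDensity f) (T ⁻¹' A)
      = ((volume.restrict (Set.Ico (0 : ℝ) 1)).withDensity f) A :=
  stmt_4_general p q m r hq hpq hdiv hr hr' k hk T hT f hf A hA
end

section
/- Let β > 1 be irrational, n ≥ 2 an integer, and suppose n²β² = p·n·β + q with integers p ≥ q ≥ 1 and n ≤ p. Write p = n·s + t with s ≥ 1, 0 ≤ t ≤ n-1. If t ≤ n - 2, then β + 1/n < ⌊β⌋ + 1, so ⌊β + 1/n⌋ = ⌊β⌋. -/
/-!
Put `x = nβ`, so `x² = p x + q` with `x > 0`. Then `x (x - p) = q ∈ [1, p]` forces `p < x < p + 1`.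
Dividing by `n` gives `s ≤ s + t/n < β`, so `⌊β⌋ = s`, and `nβ + 1 < p + 2 = n s + t + 2 ≤ n (s + 1)`
when `t ≤ n - 2`.
-/

section Root

variable {K : Type*} [Field K] [LinearOrder K] [IsStrictOrderedRing K]

theorem lt_of_sq_eq_mul_add {x p q : K} (hx : 0 < x) (hq : 0 < q) (h : x ^ 2 = p * x + q) :
    p < x := by
  nlinarith

theorem lt_add_one_of_sq_eq_mul_add {x p q : K} (hx : 0 < x) (hqp : q ≤ p)
    (h : x ^ 2 = p * x + q) : x < p + 1 := by
  by_contra! hle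
  nlinarith

end Root

theorem add_one_div_lt_of_mul_lt {β : ℝ} {n s t : ℤ} (hn : 0 < n) (ht : t ≤ n - 2)
    (h : n * β < n * s + t + 1) : β + 1 / (n : ℝ) < s + 1 := by
  have hn' : (0 : ℝ) < n := by exact_mod_cast hn
  have ht' : (t : ℝ) + 2 ≤ n := by exact_mod_cast (by omega : t + 2 ≤ n)
  rw [← mul_lt_mul_iff_right₀ hn', mul_add, mul_one_div_cancel hn'.ne']
  linarith

theorem floor_eq_of_mul_mem_Ioo {β : ℝ} {n s t : ℤ} (hn : 0 < n) (ht : 0 ≤ t) (ht' : t < n)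
    (hlow : (n * s + t : ℝ) < n * β) (hhigh : n * β < n * s + t + 1) : ⌊β⌋ = s := by
  have hn' : (0 : ℝ) < n := by exact_mod_cast hn
  have ht0 : (0 : ℝ) ≤ t := by exact_mod_cast ht
  have ht1 : (t : ℝ) + 1 ≤ n := by exact_mod_cast (by omega : t + 1 ≤ n)
  rw [Int.floor_eq_iff]
  constructor <;> nlinarith

theorem stmt_9_general (β : ℝ) (hβ : 1 < β)
    (n p q s t : ℤ) (hn : 2 ≤ n) (hq : 1 ≤ q) (hpq : q ≤ p)
    (heq : (n : ℝ) ^ 2 * β ^ 2 = (p : ℝ) * (n : ℝ) * β + (q : ℝ))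
    (hdiv : p = n * s + t) (ht : 0 ≤ t)
    (htsmall : t ≤ n - 2) :
    β + 1 / (n : ℝ) < (⌊β⌋ : ℝ) + 1 ∧ ⌊β + 1 / (n : ℝ)⌋ = ⌊β⌋ := by
  have hnpos : 0 < n := by omega
  have hx : (0 : ℝ) < n * β := mul_pos (by exact_mod_cast hnpos) (by linarith)
  have hroot : ((n : ℝ) * β) ^ 2 = p * (n * β) + q := by rw [mul_pow, heq]; ring
  have hp : (p : ℝ) = n * s + t := by exact_mod_cast hdiv
  have hlow := lt_of_sq_eq_mul_add hx (by exact_mod_cast hq) hroot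
  have hhigh := lt_add_one_of_sq_eq_mul_add hx (by exact_mod_cast hpq) hroot
  rw [hp] at hlow hhigh
  have hfloor : ⌊β⌋ = s := floor_eq_of_mul_mem_Ioo hnpos ht (by omega) hlow hhigh
  have hlt : β + 1 / (n : ℝ) < s + 1 := add_one_div_lt_of_mul_lt hnpos htsmall hhigh
  have hsβ : (s : ℝ) ≤ β := hfloor ▸ Int.floor_le β
  have hinv : (0 : ℝ) ≤ 1 / n := by positivity
  refine ⟨hfloor ▸ hlt, ?_⟩
  rw [hfloor, Int.floor_eq_iff]
  exact ⟨by linarith, hlt⟩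

theorem stmt_9 (β : ℝ) (hirr : Irrational β) (hβ : 1 < β)
    (n p q s t : ℤ) (hn : 2 ≤ n) (hq : 1 ≤ q) (hpq : q ≤ p) (hnp : n ≤ p)
    (heq : (n : ℝ) ^ 2 * β ^ 2 = (p : ℝ) * (n : ℝ) * β + (q : ℝ))
    (hdiv : p = n * s + t) (hs : 1 ≤ s) (ht : 0 ≤ t) (ht' : t ≤ n - 1)
    (htsmall : t ≤ n - 2) :
    β + 1 / (n : ℝ) < (⌊β⌋ : ℝ) + 1 ∧ ⌊β + 1 / (n : ℝ)⌋ = ⌊β⌋ :=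
  stmt_9_general β hβ n p q s t hn hq hpq heq hdiv ht htsmall
end

section
/- Let β > 1 be irrational, n ≥ 2 an integer, and suppose n²β² = p·n·β + q with integers p ≥ q ≥ 1, n < p, and write p = n·s + t with 0 ≤ t ≤ n-1. If ⌊β + 1/n⌋ = ⌊β⌋ + 1, then t = n - 1 and β + 1/n - ⌊β + 1/n⌋ = q/(n²β). -/
/-!
Put `x = nβ`. The quadratic relation reads `x (x - p) = q` with `0 < q ≤ p`, so `p < x < p + 1`
and `⌊nβ⌋ = p`. Dividing by `n` gives `⌊β⌋ = ⌊p / n⌋ = s` and `⌊β + 1/n⌋ = ⌊(p + 1) / n⌋`, so the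
jump `⌊β + 1/n⌋ = ⌊β⌋ + 1` forces `n ∣ p + 1`, i.e. `t = n - 1`. Then
`β + 1/n - (s + 1) = (x - p) / n = q / (n x)`.
-/

theorem Int.floor_eq_of_mul_sub_eq {K : Type*} [Field K] [LinearOrder K] [IsStrictOrderedRing K]
    [FloorRing K] {x : K} {p q : ℤ} (hx : 0 < x) (hq : 0 ≤ q) (hqp : q ≤ p)
    (h : x * (x - p) = q) : ⌊x⌋ = p := by
  have hq' : (0 : K) ≤ q := by exact_mod_cast hq
  have hqp' : (q : K) ≤ p := by exact_mod_cast hqp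
  rw [Int.floor_eq_iff]
  constructor <;> nlinarith

theorem stmt_10_general (β : ℝ) (hβ : 1 < β)
    (n p q s t : ℤ) (hn : 2 ≤ n) (hq : 1 ≤ q) (hpq : q ≤ p)
    (heq : (n : ℝ) ^ 2 * β ^ 2 = (p : ℝ) * (n : ℝ) * β + (q : ℝ))
    (hdiv : p = n * s + t) (ht : 0 ≤ t) (ht' : t ≤ n - 1)
    (hfloor : ⌊β + 1 / (n : ℝ)⌋ = ⌊β⌋ + 1) :
    t = n - 1 ∧
      β + 1 / (n : ℝ) - (⌊β + 1 / (n : ℝ)⌋ : ℝ) = (q : ℝ) / ((n : ℝ) ^ 2 * β) := by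
  have hn0 : (0 : ℝ) < n := by exact_mod_cast (by omega : (0 : ℤ) < n)
  have hfloor_nβ : ⌊(n : ℝ) * β⌋ = p :=
    Int.floor_eq_of_mul_sub_eq (by positivity) (by omega) hpq (by linear_combination heq)
  have hfloor_β : ⌊β⌋ = s := by
    rw [← mul_div_cancel_left₀ β hn0.ne', Int.floor_div_cast_of_nonneg (by omega), hfloor_nβ]
    exact ((Int.ediv_emod_unique (by omega)).2 ⟨by rw [hdiv, add_comm], ht, by omega⟩).1
  have hfloor_shift : ⌊β + 1 / (n : ℝ)⌋ = (p + 1) / n := by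
    rw [show β + 1 / (n : ℝ) = (n * β + 1) / n by field_simp,
      Int.floor_div_cast_of_nonneg (by omega), Int.floor_add_one, hfloor_nβ]
  have ht_eq : t = n - 1 := by
    have h := Int.ediv_mul_le (p + 1) (b := n) (by omega)
    rw [← hfloor_shift, hfloor, hfloor_β] at h
    linarith
  have htR : (t : ℝ) = n - 1 := by exact_mod_cast ht_eq
  have hdivR : (p : ℝ) = n * s + t := by exact_mod_cast hdiv
  refine ⟨ht_eq, ?_⟩
  rw [hfloor, hfloor_β, eq_div_iff (by positivity)]
  push_cast
  field_simp
  linear_combination heq + (n * β) * hdivR + (n * β) * htR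

theorem stmt_10 (β : ℝ) (hirr : Irrational β) (hβ : 1 < β)
    (n p q s t : ℤ) (hn : 2 ≤ n) (hq : 1 ≤ q) (hpq : q ≤ p) (hnp : n < p)
    (heq : (n : ℝ) ^ 2 * β ^ 2 = (p : ℝ) * (n : ℝ) * β + (q : ℝ))
    (hdiv : p = n * s + t) (ht : 0 ≤ t) (ht' : t ≤ n - 1)
    (hfloor : ⌊β + 1 / (n : ℝ)⌋ = ⌊β⌋ + 1) :
    t = n - 1 ∧
      β + 1 / (n : ℝ) - (⌊β + 1 / (n : ℝ)⌋ : ℝ) = (q : ℝ) / ((n : ℝ) ^ 2 * β) :=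
  stmt_10_general β hβ n p q s t hn hq hpq heq hdiv ht ht' hfloor
end

section
/- Write p₁/q₂ = p/z in lowest terms (gcd(p, z) = 1) with z > 1, where β₁ = p₁/q₁, β₂ = p₂/q₂ are rationals in lowest terms. Suppose x = t/(m·zⁿ) with gcd(t, z) = 1 and m, n ≥ 1, and y = β₁·β₂·x - (k·β₁ + l) for integers k, l. Then y can be written as t'/(m'·z^{n+1}) with gcd(t', z) = 1 for some positive integer m'. -/
/-! Since `p₁ / q₂ = p / z`, the product `β₁ β₂ x` equals `p p₂ t / (q₁ m z^(n+1))`, whose numerator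
is coprime to `z` because `z ∣ q₂` forces `gcd(p₂, z) = 1`. Over the same denominator the shift
`k β₁ + l` has a numerator divisible by `z`, so subtracting it keeps the numerator coprime to `z`. -/

theorem div_mul_div_mul_div_sub_eq_div_pow_succ {K : Type*} [Field K]
    {p₁ q₁ p₂ q₂ p z t m k l : K} (n : ℕ) (hq₁ : q₁ ≠ 0) (hq₂ : q₂ ≠ 0) (hm : m ≠ 0)
    (hz : z ≠ 0) (hred : p₁ * z = p * q₂) :
    p₁ / q₁ * (p₂ / q₂) * (t / (m * z ^ n)) - (k * (p₁ / q₁) + l) =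
      (p * p₂ * t - z * (m * z ^ n * (k * p₁ + l * q₁))) / (q₁ * m * z ^ (n + 1)) := by
  field_simp
  linear_combination p₂ * t * z ^ n * hred

theorem stmt_14_general (p₁ q₁ p₂ q₂ p z : ℤ)
    (hq₁ : 0 < q₁) (hq₂ : 0 < q₂)
    (hcop₂ : IsCoprime p₂ q₂)
    (hz : 1 < z) (hpz : IsCoprime p z) (hred : p₁ * z = p * q₂)
    (t m : ℤ) (n : ℕ) (hm : 1 ≤ m) (htz : IsCoprime t z)
    (k l : ℤ) (x y : ℝ)
    (hx : x = (t : ℝ) / ((m : ℝ) * (z : ℝ) ^ n))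
    (hy : y = ((p₁ : ℝ) / q₁) * ((p₂ : ℝ) / q₂) * x
      - ((k : ℝ) * ((p₁ : ℝ) / q₁) + (l : ℝ))) :
    ∃ t' m' : ℤ, 0 < m' ∧ IsCoprime t' z ∧
      y = (t' : ℝ) / ((m' : ℝ) * (z : ℝ) ^ (n + 1)) := by
  have hzq₂ : z ∣ q₂ := hpz.symm.dvd_of_dvd_mul_left ⟨p₁, by rw [← hred, mul_comm]⟩
  have hp₂z : IsCoprime p₂ z := hcop₂.of_isCoprime_of_dvd_right hzq₂
  refine ⟨p * p₂ * t - z * (m * z ^ n * (k * p₁ + l * q₁)), q₁ * m, by positivity,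
    IsCoprime.sub_mul_left_left_iff.mpr ((hpz.mul_left hp₂z).mul_left htz), ?_⟩
  have hred' : (p₁ : ℝ) * z = p * q₂ := by exact_mod_cast hred
  rw [hy, hx, div_mul_div_mul_div_sub_eq_div_pow_succ n (by positivity) (by positivity)
    (by positivity) (by positivity) hred']
  push_cast
  ring

theorem stmt_14 (p₁ q₁ p₂ q₂ p z : ℤ)
    (hp₁ : 0 < p₁) (hq₁ : 0 < q₁) (hp₂ : 0 < p₂) (hq₂ : 0 < q₂)
    (hcop₁ : IsCoprime p₁ q₁) (hcop₂ : IsCoprime p₂ q₂)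
    (hz : 1 < z) (hpz : IsCoprime p z) (hred : p₁ * z = p * q₂)
    (t m : ℤ) (n : ℕ) (hm : 1 ≤ m) (hn : 1 ≤ n) (htz : IsCoprime t z)
    (k l : ℤ) (x y : ℝ)
    (hx : x = (t : ℝ) / ((m : ℝ) * (z : ℝ) ^ n))
    (hy : y = ((p₁ : ℝ) / q₁) * ((p₂ : ℝ) / q₂) * x
      - ((k : ℝ) * ((p₁ : ℝ) / q₁) + (l : ℝ))) :
    ∃ t' m' : ℤ, 0 < m' ∧ IsCoprime t' z ∧
      y = (t' : ℝ) / ((m' : ℝ) * (z : ℝ) ^ (n + 1)) :=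
  stmt_14_general p₁ q₁ p₂ q₂ p z hq₁ hq₂ hcop₂ hz hpz hred t m n hm htz k l x y hx hy
end

section
/- Let β₁ = p₁/q₁ and β₂ = p₂/q₂ be rationals in lowest terms with p₁ not a multiple of q₂, and let T(x) = frac(β₁·frac(β₂·x)) on [0,1). Then the forward orbit of 1 under T (with T at 1 interpreted as the left limit) is an infinite set. -/
/-! Choose a prime `ℓ` dividing `q₂` more often than `p₁`; then `v_ℓ(β₂) < 0` and
`c := v_ℓ(β₁) + v_ℓ(β₂) < 0`. A rational of negative `ℓ`-adic valuation differs from its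
fractional part by an integer, which has nonnegative valuation, so taking fractional parts
preserves the valuation (and such a rational is not an integer, so the left limit `fractL` agrees
with `Int.fract` there). Hence `T` maps a rational of nonpositive valuation `v` to a rational of
valuation `v + c`, and the `n`-th orbit point of `1` has valuation `(n + 1) c`. -/

/-- Left-continuous fractional part: `fractL y = y - ⌊y⌋` for `y ∉ ℤ`, and `fractL y = 1`
for `y ∈ ℤ`; it is the left limit of `Int.fract` at `y`. -/
noncomputable def fractL (y : ℝ) : ℝ := 1 - Int.fract (1 - y)

open Function

lemma fractL_eq_fract {y : ℝ} (hy : Int.fract y ≠ 0) : fractL y = Int.fract y := by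
  have h : (1 : ℝ) - y = ((1 : ℤ) : ℝ) + -y := by push_cast; ring
  rw [fractL, h, Int.fract_intCast_add, Int.fract_neg hy]
  ring

lemma exists_prime_padicValInt_lt_of_not_dvd {a b : ℤ} (hb : b ≠ 0) (h : ¬ b ∣ a) :
    ∃ ℓ : ℕ, ℓ.Prime ∧ padicValInt ℓ a < padicValInt ℓ b := by
  have ha : a ≠ 0 := by rintro rfl; exact h (dvd_zero b)
  by_contra! hle
  refine h (Int.natAbs_dvd_natAbs.1 ?_)
  refine (Nat.factorization_prime_le_iff_dvd (Int.natAbs_ne_zero.2 hb)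
    (Int.natAbs_ne_zero.2 ha)).1 fun ℓ hℓ => ?_
  rw [Nat.factorization_def _ hℓ, Nat.factorization_def _ hℓ]
  exact hle ℓ hℓ

def betaMap (β x : ℚ) : ℚ := Int.fract (β * x)

lemma ratCast_betaMap (β x : ℚ) : ((betaMap β x : ℚ) : ℝ) = Int.fract ((β : ℝ) * x) := by
  rw [betaMap, Rat.cast_fract, Rat.cast_mul]

lemma ne_zero_of_padicValRat_neg {ℓ : ℕ} {q : ℚ} (h : padicValRat ℓ q < 0) : q ≠ 0 := by
  rintro rfl
  simp at h

section padicValRat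

variable {ℓ : ℕ} [Fact ℓ.Prime]

lemma padicValRat_intCast_div_intCast {a b : ℤ} (ha : a ≠ 0) (hb : b ≠ 0) :
    padicValRat ℓ ((a : ℚ) / b) = padicValInt ℓ a - padicValInt ℓ b := by
  rw [padicValRat.div (by exact_mod_cast ha) (by exact_mod_cast hb), padicValRat.of_int,
    padicValRat.of_int]

lemma padicValRat_fract_of_neg {q : ℚ} (h : padicValRat ℓ q < 0) :
    padicValRat ℓ (Int.fract q) = padicValRat ℓ q := by
  have hfloor : padicValRat ℓ (-(⌊q⌋ : ℚ)) ≥ 0 := by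
    rw [padicValRat.neg, padicValRat.of_int]
    exact Int.natCast_nonneg _
  rcases eq_or_ne (⌊q⌋ : ℚ) 0 with h0 | h0
  · rw [Int.fract, h0, sub_zero]
  rw [Int.fract, sub_eq_add_neg]
  refine padicValRat.add_eq_of_lt ?_ (ne_zero_of_padicValRat_neg h) (neg_ne_zero.2 h0) (by omega)
  intro hint
  rw [add_neg_eq_zero.1 hint, ← neg_neg (⌊q⌋ : ℚ), padicValRat.neg] at h
  omega

lemma fract_ne_zero_of_padicValRat_neg {q : ℚ} (h : padicValRat ℓ q < 0) : Int.fract q ≠ 0 :=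
  ne_zero_of_padicValRat_neg ((padicValRat_fract_of_neg h).trans_lt h)

lemma fractL_mul_ratCast {β x : ℚ} (h : padicValRat ℓ (β * x) < 0) :
    fractL ((β : ℝ) * x) = betaMap β x := by
  rw [ratCast_betaMap, fractL_eq_fract]
  rw [← Rat.cast_mul, ← Rat.cast_fract]
  exact_mod_cast fract_ne_zero_of_padicValRat_neg h

lemma padicValRat_mul_betaMap {β₁ β₂ x : ℚ} (hβ₁ : β₁ ≠ 0) (h : padicValRat ℓ (β₂ * x) < 0) :
    padicValRat ℓ (β₁ * betaMap β₂ x) = padicValRat ℓ β₁ + padicValRat ℓ (β₂ * x) := by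
  rw [betaMap, padicValRat.mul hβ₁ (fract_ne_zero_of_padicValRat_neg h),
    padicValRat_fract_of_neg h]

variable {β₁ β₂ : ℚ}

lemma padicValRat_betaMap_comp (hβ₁ : β₁ ≠ 0) (hβ₂ : padicValRat ℓ β₂ < 0)
    (hc : padicValRat ℓ β₁ + padicValRat ℓ β₂ < 0) {x : ℚ} (hx : x ≠ 0)
    (hvx : padicValRat ℓ x ≤ 0) :
    padicValRat ℓ ((betaMap β₁ ∘ betaMap β₂) x) =
      padicValRat ℓ x + (padicValRat ℓ β₁ + padicValRat ℓ β₂) := by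
  have hv₂ : padicValRat ℓ (β₂ * x) = padicValRat ℓ β₂ + padicValRat ℓ x :=
    padicValRat.mul (ne_zero_of_padicValRat_neg hβ₂) hx
  have hv₁ := padicValRat_mul_betaMap hβ₁ (show padicValRat ℓ (β₂ * x) < 0 by omega)
  rw [comp_apply, betaMap, padicValRat_fract_of_neg (by omega)]
  omega

lemma fractL_mul_fractL_mul_ratCast (hβ₁ : β₁ ≠ 0) (hβ₂ : padicValRat ℓ β₂ < 0)
    (hc : padicValRat ℓ β₁ + padicValRat ℓ β₂ < 0) {x : ℚ} (hx : x ≠ 0)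
    (hvx : padicValRat ℓ x ≤ 0) :
    fractL (β₁ * fractL (β₂ * x)) = ((betaMap β₁ ∘ betaMap β₂) x : ℚ) := by
  have hv₂ : padicValRat ℓ (β₂ * x) = padicValRat ℓ β₂ + padicValRat ℓ x :=
    padicValRat.mul (ne_zero_of_padicValRat_neg hβ₂) hx
  have hv₁ := padicValRat_mul_betaMap hβ₁ (show padicValRat ℓ (β₂ * x) < 0 by omega)
  rw [fractL_mul_ratCast (ℓ := ℓ) (by omega), fractL_mul_ratCast (ℓ := ℓ) (by omega)]
  rfl

lemma padicValRat_iterate_betaMap_comp (hβ₁ : β₁ ≠ 0) (hβ₂ : padicValRat ℓ β₂ < 0)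
    (hc : padicValRat ℓ β₁ + padicValRat ℓ β₂ < 0) {x : ℚ} (hx : padicValRat ℓ x < 0) (n : ℕ) :
    padicValRat ℓ ((betaMap β₁ ∘ betaMap β₂)^[n] x) =
      padicValRat ℓ x + n * (padicValRat ℓ β₁ + padicValRat ℓ β₂) := by
  induction n with
  | zero => simp
  | succ n ih =>
    have hneg : padicValRat ℓ ((betaMap β₁ ∘ betaMap β₂)^[n] x) < 0 := by
      rw [ih]
      nlinarith [(Int.natCast_nonneg n : (0 : ℤ) ≤ n)]
    rw [iterate_succ_apply', padicValRat_betaMap_comp hβ₁ hβ₂ hc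
      (ne_zero_of_padicValRat_neg hneg) hneg.le, ih]
    push_cast
    ring

lemma injective_iterate_betaMap_comp (hβ₁ : β₁ ≠ 0) (hβ₂ : padicValRat ℓ β₂ < 0)
    (hc : padicValRat ℓ β₁ + padicValRat ℓ β₂ < 0) {x : ℚ} (hx : padicValRat ℓ x < 0) :
    Injective fun n : ℕ => (betaMap β₁ ∘ betaMap β₂)^[n] x := by
  intro m n hmn
  have hval := congrArg (padicValRat ℓ) hmn
  simp only [padicValRat_iterate_betaMap_comp hβ₁ hβ₂ hc hx, add_right_inj] at hval
  exact_mod_cast mul_right_cancel₀ hc.ne hval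

end padicValRat

lemma semiconj_ratCast_betaMap_comp (β₁ β₂ : ℚ) :
    Semiconj ((↑) : ℚ → ℝ) (betaMap β₁ ∘ betaMap β₂)
      (fun x => Int.fract (β₁ * Int.fract (β₂ * x))) := fun x => by
  simp only [comp_apply, ratCast_betaMap]

lemma exists_prime_padicValRat_div_neg {p₁ q₁ p₂ q₂ : ℤ} (hq₁ : q₁ ≠ 0) (hq₂ : q₂ ≠ 0)
    (hcop₂ : IsCoprime p₂ q₂) (hnd : ¬ q₂ ∣ p₁) :
    ∃ ℓ : ℕ, ℓ.Prime ∧ padicValRat ℓ ((p₂ : ℚ) / q₂) < 0 ∧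
      padicValRat ℓ ((p₁ : ℚ) / q₁) + padicValRat ℓ ((p₂ : ℚ) / q₂) < 0 := by
  obtain ⟨ℓ, hℓ, hlt⟩ := exists_prime_padicValInt_lt_of_not_dvd hq₂ hnd
  have : Fact ℓ.Prime := ⟨hℓ⟩
  have hp₁ : p₁ ≠ 0 := by rintro rfl; exact hnd (dvd_zero q₂)
  have hℓq₂ : (ℓ : ℤ) ∣ q₂ := by
    simpa using (padicValInt_dvd_iff 1 q₂).2 (Or.inr (by omega))
  have hℓp₂ : ¬ (ℓ : ℤ) ∣ p₂ := fun hℓp₂ =>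
    (Nat.prime_iff_prime_int.1 hℓ).not_isUnit (hcop₂.isUnit_of_dvd' hℓp₂ hℓq₂)
  have hp₂ : p₂ ≠ 0 := by rintro rfl; exact hℓp₂ (dvd_zero _)
  refine ⟨ℓ, hℓ, ?_⟩
  rw [padicValRat_intCast_div_intCast hp₁ hq₁, padicValRat_intCast_div_intCast hp₂ hq₂,
    padicValInt.eq_zero_of_not_dvd hℓp₂]
  omega

theorem stmt_15_general (p₁ q₁ p₂ q₂ : ℤ)
    (hq₁ : 0 < q₁) (hq₂ : 0 < q₂)
    (hcop₂ : IsCoprime p₂ q₂)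
    (hnd : ¬ q₂ ∣ p₁)
    (T : ℝ → ℝ)
    (hT : ∀ x, T x = Int.fract (((p₁ : ℝ) / q₁) * Int.fract (((p₂ : ℝ) / q₂) * x))) :
    Set.Infinite {y : ℝ | ∃ n : ℕ,
      y = T^[n] (fractL (((p₁ : ℝ) / q₁) * fractL (((p₂ : ℝ) / q₂) * 1)))} := by
  obtain ⟨ℓ, hℓ, hβ₂, hc⟩ := exists_prime_padicValRat_div_neg hq₁.ne' hq₂.ne' hcop₂ hnd
  have : Fact ℓ.Prime := ⟨hℓ⟩
  have hp₁ : p₁ ≠ 0 := by rintro rfl; exact hnd (dvd_zero q₂)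
  have hβ₁ : (p₁ / q₁ : ℚ) ≠ 0 := div_ne_zero (by exact_mod_cast hp₁) (by exact_mod_cast hq₁.ne')
  set S := betaMap (p₁ / q₁) ∘ betaMap (p₂ / q₂)
  have hTS : Semiconj ((↑) : ℚ → ℝ) S T := by
    convert semiconj_ratCast_betaMap_comp _ _ using 1
    ext x
    rw [hT]
    push_cast
    rfl
  have hstart := fractL_mul_fractL_mul_ratCast hβ₁ hβ₂ hc one_ne_zero padicValRat.one.le
  push_cast at hstart
  have hvS : padicValRat ℓ (S 1) < 0 := by
    rw [padicValRat_betaMap_comp hβ₁ hβ₂ hc one_ne_zero padicValRat.one.le, padicValRat.one]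
    simpa using hc
  refine Set.infinite_of_injective_forall_mem (f := fun n => ((S^[n] (S 1) : ℚ) : ℝ))
    (Rat.cast_injective.comp (injective_iterate_betaMap_comp hβ₁ hβ₂ hc hvS)) fun n => ⟨n, ?_⟩
  rw [hstart, (hTS.iterate_right n).eq]

theorem stmt_15 (p₁ q₁ p₂ q₂ : ℤ)
    (hp₁ : 0 < p₁) (hq₁ : 0 < q₁) (hp₂ : 0 < p₂) (hq₂ : 0 < q₂)
    (hcop₁ : IsCoprime p₁ q₁) (hcop₂ : IsCoprime p₂ q₂)
    (hnd : ¬ q₂ ∣ p₁)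
    (T : ℝ → ℝ)
    (hT : ∀ x, T x = Int.fract (((p₁ : ℝ) / q₁) * Int.fract (((p₂ : ℝ) / q₂) * x))) :
    Set.Infinite {y : ℝ | ∃ n : ℕ,
      y = T^[n] (fractL (((p₁ : ℝ) / q₁) * fractL (((p₂ : ℝ) / q₂) * 1)))} :=
  stmt_15_general p₁ q₁ p₂ q₂ hq₁ hq₂ hcop₂ hnd T hT
end

section
/- Let T : [0,1) → [0,1) be defined by T(x) = frac((3/2)·frac((4/3)·x)), i.e. T(x) = 2x on [0,1/2), T(x) = 2x - 1 on [1/2,3/4), and T(x) = 2x - 3/2 on [3/4,1). Then the probability measure with density f(x) = (2/3)·(1 + 1_{[0,1/2)}(x)) is T-invariant. -/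
open MeasureTheory
open scoped ENNReal

lemma vol_affine16 (c : ℝ) (s : Set ℝ) :
    volume ((fun x : ℝ => 2 * x - c) ⁻¹' s) = ENNReal.ofReal (1/2) * volume s := by
  have h1 : (fun x : ℝ => 2 * x - c) ⁻¹' s = ((2:ℝ) * ·) ⁻¹' ((fun y : ℝ => y + -c) ⁻¹' s) := by
    ext x; simp [sub_eq_add_neg]
  rw [h1, Real.volume_preimage_mul_left (by norm_num : (2:ℝ) ≠ 0),
    measure_preimage_add_right]
  norm_num [abs_of_nonneg]

lemma mu_apply16 (f : ℝ → ℝ≥0∞)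
    (hf : ∀ x, f x = ENNReal.ofReal
      ((2 / 3) * (1 + Set.indicator (Set.Ico (0 : ℝ) (1 / 2)) (fun _ => (1 : ℝ)) x)))
    (S : Set ℝ) (hS : MeasurableSet S) :
    ((volume.restrict (Set.Ico (0 : ℝ) 1)).withDensity f) S
      = ENNReal.ofReal (2/3) * volume (S ∩ Set.Ico (0:ℝ) 1)
        + ENNReal.ofReal (2/3) * volume (S ∩ Set.Ico (0:ℝ) (1/2)) := by
  rw [withDensity_apply _ hS, Measure.restrict_restrict hS]
  have hfe : ∀ x, f x = ENNReal.ofReal (2/3)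
      + Set.indicator (Set.Ico (0:ℝ) (1/2)) (fun _ => ENNReal.ofReal (2/3)) x := by
    intro x
    rw [hf x]
    by_cases hx : x ∈ Set.Ico (0:ℝ) (1/2)
    · rw [Set.indicator_of_mem hx, Set.indicator_of_mem hx,
        ← ENNReal.ofReal_add (by norm_num) (by norm_num)]
      norm_num
    · rw [Set.indicator_of_notMem hx, Set.indicator_of_notMem hx]
      norm_num
  have h2 : Set.Ico (0:ℝ) (1/2) ∩ (S ∩ Set.Ico (0:ℝ) 1) = S ∩ Set.Ico (0:ℝ) (1/2) := by
    ext x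
    simp only [Set.mem_inter_iff, Set.mem_Ico]
    constructor
    · rintro ⟨⟨h0, h1⟩, hS, _⟩; exact ⟨hS, h0, h1⟩
    · rintro ⟨hS, h0, h1⟩; exact ⟨⟨h0, h1⟩, hS, h0, by linarith⟩
  calc ∫⁻ x in S ∩ Set.Ico (0:ℝ) 1, f x
      = ∫⁻ x in S ∩ Set.Ico (0:ℝ) 1, (ENNReal.ofReal (2/3)
        + Set.indicator (Set.Ico (0:ℝ) (1/2)) (fun _ => ENNReal.ofReal (2/3)) x) := by
        exact lintegral_congr fun x => hfe x
    _ = ENNReal.ofReal (2/3) * volume (S ∩ Set.Ico (0:ℝ) 1)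
        + ENNReal.ofReal (2/3) * volume (S ∩ Set.Ico (0:ℝ) (1/2)) := by
        rw [lintegral_add_left measurable_const, lintegral_const,
          lintegral_indicator measurableSet_Ico, lintegral_const,
          Measure.restrict_apply_univ, Measure.restrict_restrict measurableSet_Ico,
          Measure.restrict_apply_univ, h2]

theorem stmt_16 (T : ℝ → ℝ)
    (hT : ∀ x : ℝ, T x =
      if x < 1 / 2 then 2 * x
      else if x < 3 / 4 then 2 * x - 1
      else 2 * x - 3 / 2)
    (f : ℝ → ℝ≥0∞)
    (hf : ∀ x, f x = ENNReal.ofReal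
      ((2 / 3) * (1 + Set.indicator (Set.Ico (0 : ℝ) (1 / 2)) (fun _ => (1 : ℝ)) x)))
    (A : Set ℝ) (hA : MeasurableSet A) (hA1 : A ⊆ Set.Ico (0 : ℝ) 1) :
    ((volume.restrict (Set.Ico (0 : ℝ) 1)).withDensity f) (T ⁻¹' A)
      = ((volume.restrict (Set.Ico (0 : ℝ) 1)).withDensity f) A := by
  have hTm : Measurable T := by
    have hTe : T = fun x => if x < 1/2 then 2*x else if x < 3/4 then 2*x-1 else 2*x-3/2 :=
      funext hT
    rw [hTe]
    apply Measurable.ite (measurableSet_lt measurable_id measurable_const)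
      (measurable_id.const_mul 2)
    exact Measurable.ite (measurableSet_lt measurable_id measurable_const)
      ((measurable_id.const_mul 2).sub_const 1)
      ((measurable_id.const_mul 2).sub_const (3/2))
  have hA0m : MeasurableSet (A ∩ Set.Ico (0:ℝ) (1/2)) := hA.inter measurableSet_Ico
  -- the three pieces
  have hm1 : MeasurableSet ((fun x : ℝ => 2 * x) ⁻¹' A) := (measurable_id.const_mul 2) hA
  have hm2 : MeasurableSet ((fun x : ℝ => 2 * x - 1) ⁻¹' (A ∩ Set.Ico (0:ℝ) (1/2))) :=
    ((measurable_id.const_mul 2).sub_const 1) hA0m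
  have hm3 : MeasurableSet ((fun x : ℝ => 2 * x - 3/2) ⁻¹' (A ∩ Set.Ico (0:ℝ) (1/2))) :=
    ((measurable_id.const_mul 2).sub_const (3/2)) hA0m
  -- range facts
  have hr1 : ∀ x : ℝ, x ∈ (fun x : ℝ => 2 * x) ⁻¹' A → 0 ≤ x ∧ x < 1/2 := by
    intro x hx
    have h := hA1 hx
    simp only [Set.mem_Ico] at h
    exact ⟨by linarith [h.1], by linarith [h.2]⟩
  have hr2 : ∀ x : ℝ, x ∈ (fun x : ℝ => 2 * x - 1) ⁻¹' (A ∩ Set.Ico (0:ℝ) (1/2)) →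
      1/2 ≤ x ∧ x < 3/4 := by
    intro x hx
    have h := hx.2
    simp only [Set.mem_Ico] at h
    exact ⟨by linarith [h.1], by linarith [h.2]⟩
  have hr3 : ∀ x : ℝ, x ∈ (fun x : ℝ => 2 * x - 3/2) ⁻¹' (A ∩ Set.Ico (0:ℝ) (1/2)) →
      3/4 ≤ x ∧ x < 1 := by
    intro x hx
    have h := hx.2
    simp only [Set.mem_Ico] at h
    exact ⟨by linarith [h.1], by linarith [h.2]⟩
  -- decomposition identities
  have hset1 : T ⁻¹' A ∩ Set.Ico (0:ℝ) 1 =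
      ((fun x : ℝ => 2 * x) ⁻¹' A ∪ (fun x : ℝ => 2 * x - 1) ⁻¹' (A ∩ Set.Ico (0:ℝ) (1/2)))
        ∪ (fun x : ℝ => 2 * x - 3/2) ⁻¹' (A ∩ Set.Ico (0:ℝ) (1/2)) := by
    ext x
    simp only [Set.mem_inter_iff, Set.mem_preimage, Set.mem_Ico, Set.mem_union]
    constructor
    · rintro ⟨hTx, hx0, hx1⟩
      rcases lt_or_ge x (1/2) with h | h
      · left; left; rwa [hT x, if_pos h] at hTx
      rcases lt_or_ge x (3/4) with h' | h'
      · left; right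
        rw [hT x, if_neg (not_lt.2 h), if_pos h'] at hTx
        exact ⟨hTx, by linarith, by linarith⟩
      · right
        rw [hT x, if_neg (not_lt.2 h), if_neg (not_lt.2 h')] at hTx
        exact ⟨hTx, by linarith, by linarith⟩
    · rintro ((h | h) | h)
      · obtain ⟨h0, h1⟩ := hr1 x h
        refine ⟨?_, h0, by linarith⟩
        rw [hT x, if_pos h1]; exact h
      · obtain ⟨h0, h1⟩ := hr2 x h
        refine ⟨?_, by linarith, by linarith⟩
        rw [hT x, if_neg (not_lt.2 h0), if_pos h1]; exact h.1
      · obtain ⟨h0, h1⟩ := hr3 x h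
        refine ⟨?_, by linarith, h1⟩
        rw [hT x, if_neg (by push_neg; linarith), if_neg (not_lt.2 h0)]; exact h.1
  have hset2 : T ⁻¹' A ∩ Set.Ico (0:ℝ) (1/2) = (fun x : ℝ => 2 * x) ⁻¹' A := by
    ext x
    simp only [Set.mem_inter_iff, Set.mem_preimage, Set.mem_Ico]
    constructor
    · rintro ⟨hTx, _, hx1⟩
      rwa [hT x, if_pos hx1] at hTx
    · intro h
      obtain ⟨h0, h1⟩ := hr1 x h
      refine ⟨?_, h0, h1⟩
      rw [hT x, if_pos h1]; exact h
  -- disjointness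
  have hd12 : Disjoint ((fun x : ℝ => 2 * x) ⁻¹' A)
      ((fun x : ℝ => 2 * x - 1) ⁻¹' (A ∩ Set.Ico (0:ℝ) (1/2))) := by
    rw [Set.disjoint_left]
    intro x h1 h2
    have := hr1 x h1; have := hr2 x h2; linarith [this.1]
  have hd3 : Disjoint ((fun x : ℝ => 2 * x) ⁻¹' A ∪
      (fun x : ℝ => 2 * x - 1) ⁻¹' (A ∩ Set.Ico (0:ℝ) (1/2)))
      ((fun x : ℝ => 2 * x - 3/2) ⁻¹' (A ∩ Set.Ico (0:ℝ) (1/2))) := by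
    rw [Set.disjoint_left]
    rintro x (h1 | h1) h2
    · have := hr1 x h1; have h3 := hr3 x h2; linarith [this.2, h3.1]
    · have := hr2 x h1; have h3 := hr3 x h2; linarith [this.2, h3.1]
  -- volume computations
  have hv1 : volume ((fun x : ℝ => 2 * x) ⁻¹' A) = ENNReal.ofReal (1/2) * volume A := by
    have he : (fun x : ℝ => 2 * x) ⁻¹' A = (fun x : ℝ => 2 * x - 0) ⁻¹' A := by
      ext x; simp
    rw [he, vol_affine16]
  have hv2 : volume ((fun x : ℝ => 2 * x - 1) ⁻¹' (A ∩ Set.Ico (0:ℝ) (1/2)))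
      = ENNReal.ofReal (1/2) * volume (A ∩ Set.Ico (0:ℝ) (1/2)) := vol_affine16 1 _
  have hv3 : volume ((fun x : ℝ => 2 * x - 3/2) ⁻¹' (A ∩ Set.Ico (0:ℝ) (1/2)))
      = ENNReal.ofReal (1/2) * volume (A ∩ Set.Ico (0:ℝ) (1/2)) := vol_affine16 (3/2) _
  -- put together
  rw [mu_apply16 f hf _ (hTm hA), mu_apply16 f hf A hA, hset1, hset2,
    measure_union hd3 hm3, measure_union hd12 hm2, hv1, hv2, hv3,
    Set.inter_eq_left.mpr hA1]
  have huv : ENNReal.ofReal (2/3) * ENNReal.ofReal (1/2)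
      + ENNReal.ofReal (2/3) * ENNReal.ofReal (1/2) = ENNReal.ofReal (2/3) := by
    rw [← ENNReal.ofReal_mul (by norm_num), ← ENNReal.ofReal_add (by norm_num) (by norm_num)]
    norm_num
  set u := ENNReal.ofReal (2/3)
  set v := ENNReal.ofReal (1/2)
  set a := volume A
  set b := volume (A ∩ Set.Ico (0:ℝ) (1/2))
  calc u * (v * a + v * b + v * b) + u * (v * a)
      = (u * v + u * v) * a + (u * v + u * v) * b := by ring
    _ = u * a + u * b := by rw [huv]
end

section
/- Let T : [0,1) → [0,1) be the piecewise linear map of slope 6 with T(x) = 6x - j on [j/6, (j+1)/6) for j = 0,...,3, T(x) = 6x - 4 on [4/6, 3/4), T(x) = 6x - 9/2 on [3/4, 11/12), and T(x) = 6x - 11/2 on [11/12, 1). Then the probability measure with density f(x) = (6/7)·(1 + (1/3)·1_{[0,1/2)}(x)) is T-invariant. -/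
open MeasureTheory
open scoped ENNReal

lemma vol_affine (e : ℝ) (S : Set ℝ) :
    volume ((fun x => 6 * x - e) ⁻¹' S) = ENNReal.ofReal (1/6) * volume S := by
  have h : (fun x : ℝ => 6 * x - e) ⁻¹' S
      = (fun x : ℝ => 6 * x) ⁻¹' ((fun y : ℝ => y + (-e)) ⁻¹' S) := by
    ext x; simp [sub_eq_add_neg]
  rw [h, Real.volume_preimage_mul_left (by norm_num : (6:ℝ) ≠ 0)]
  rw [measure_preimage_add_right]
  congr 1; rw [abs_of_nonneg (by norm_num : (0:ℝ) ≤ (6:ℝ)⁻¹)]; norm_num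

lemma vol_split (S : Set ℝ) (hS : MeasurableSet S) {a b c : ℝ} (hab : a ≤ b) (hbc : b ≤ c) :
    volume (S ∩ Set.Ico a c)
      = volume (S ∩ Set.Ico a b) + volume (S ∩ Set.Ico b c) := by
  rw [← Set.Ico_union_Ico_eq_Ico hab hbc, Set.inter_union_distrib_left]
  rw [measure_union ?_ (hS.inter measurableSet_Ico)]
  exact ((Set.Ico_disjoint_Ico_same (b := b)).mono Set.inter_subset_right Set.inter_subset_right)

lemma branch_vol {T : ℝ → ℝ} {A : Set ℝ} {c d e : ℝ}
    (h : ∀ x, c ≤ x → x < d → T x = 6 * x - e) :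
    volume (T ⁻¹' A ∩ Set.Ico c d)
      = ENNReal.ofReal (1/6) * volume (A ∩ Set.Ico (6*c - e) (6*d - e)) := by
  have hset : T ⁻¹' A ∩ Set.Ico c d
      = (fun x => 6 * x - e) ⁻¹' (A ∩ Set.Ico (6*c - e) (6*d - e)) := by
    ext x
    simp only [Set.mem_inter_iff, Set.mem_preimage, Set.mem_Ico]
    constructor
    · rintro ⟨hx, h1, h2⟩
      rw [h x h1 h2] at hx
      exact ⟨hx, by linarith, by linarith⟩
    · rintro ⟨hx, h1, h2⟩
      have hc : c ≤ x := by linarith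
      have hd : x < d := by linarith
      rw [h x hc hd]
      exact ⟨hx, hc, hd⟩
  rw [hset, vol_affine]

lemma mu_eq (f : ℝ → ℝ≥0∞)
    (hf : ∀ x, f x = ENNReal.ofReal
      ((6 / 7) * (1 + (1 / 3) *
        Set.indicator (Set.Ico (0 : ℝ) (1 / 2)) (fun _ => (1 : ℝ)) x)))
    (S : Set ℝ) (hS : MeasurableSet S) :
    ((volume.restrict (Set.Ico (0 : ℝ) 1)).withDensity f) S
      = ENNReal.ofReal (6/7) * volume (S ∩ Set.Ico (0:ℝ) 1)
        + ENNReal.ofReal (2/7) * volume (S ∩ Set.Ico (0:ℝ) (1/2)) := by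
  have hfeq : ∀ x, f x = ENNReal.ofReal (6/7)
      + Set.indicator (Set.Ico (0:ℝ) (1/2)) (fun _ => ENNReal.ofReal (2/7)) x := by
    intro x
    rw [hf x]
    by_cases hx : x ∈ Set.Ico (0:ℝ) (1/2)
    · rw [Set.indicator_of_mem hx, Set.indicator_of_mem hx,
        ← ENNReal.ofReal_add (by norm_num) (by norm_num)]
      norm_num
    · rw [Set.indicator_of_notMem hx, Set.indicator_of_notMem hx]
      norm_num
  rw [withDensity_apply _ hS, Measure.restrict_restrict hS]
  rw [lintegral_congr hfeq]
  rw [lintegral_add_left measurable_const]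
  rw [lintegral_const, lintegral_indicator measurableSet_Ico _, lintegral_const]
  rw [Measure.restrict_apply_univ, Measure.restrict_restrict measurableSet_Ico]
  have h2 : Set.Ico (0:ℝ) (1/2) ∩ (S ∩ Set.Ico (0:ℝ) 1) = S ∩ Set.Ico (0:ℝ) (1/2) := by
    ext x; simp only [Set.mem_inter_iff, Set.mem_Ico]
    constructor
    · rintro ⟨⟨h1, h2⟩, h3, _⟩; exact ⟨h3, h1, h2⟩
    · rintro ⟨h3, h1, h2⟩; exact ⟨⟨h1, h2⟩, h3, h1, by linarith⟩
  rw [h2, Measure.restrict_apply_univ]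

lemma arith (a b : ℝ≥0∞) (ha : a ≠ ⊤) (hb : b ≠ ⊤) :
    ENNReal.ofReal (6/7) * (ENNReal.ofReal (1/6) * (5 * a + 2 * b))
      + ENNReal.ofReal (2/7) * (ENNReal.ofReal (1/6) * (3 * a))
    = ENNReal.ofReal (6/7) * a + ENNReal.ofReal (2/7) * b := by
  have h5a : (5:ℝ≥0∞) * a ≠ ⊤ := ENNReal.mul_ne_top (by simp) ha
  have h2b : (2:ℝ≥0∞) * b ≠ ⊤ := ENNReal.mul_ne_top (by simp) hb
  have h3a : (3:ℝ≥0∞) * a ≠ ⊤ := ENNReal.mul_ne_top (by simp) ha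
  have hL : ENNReal.ofReal (6/7) * (ENNReal.ofReal (1/6) * (5 * a + 2 * b))
      + ENNReal.ofReal (2/7) * (ENNReal.ofReal (1/6) * (3 * a)) ≠ ⊤ :=
    ENNReal.add_ne_top.2 ⟨ENNReal.mul_ne_top (by simp)
      (ENNReal.mul_ne_top (by simp) (ENNReal.add_ne_top.2 ⟨h5a, h2b⟩)),
      ENNReal.mul_ne_top (by simp) (ENNReal.mul_ne_top (by simp) h3a)⟩
  have hR : ENNReal.ofReal (6/7) * a + ENNReal.ofReal (2/7) * b ≠ ⊤ :=
    ENNReal.add_ne_top.2 ⟨ENNReal.mul_ne_top (by simp) ha, ENNReal.mul_ne_top (by simp) hb⟩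
  rw [← ENNReal.toReal_eq_toReal_iff' hL hR,
      ENNReal.toReal_add (ENNReal.mul_ne_top (by simp) (ENNReal.mul_ne_top (by simp) (ENNReal.add_ne_top.2 ⟨h5a, h2b⟩))) (ENNReal.mul_ne_top (by simp) (ENNReal.mul_ne_top (by simp) h3a)),
      ENNReal.toReal_add (ENNReal.mul_ne_top (by simp) ha) (ENNReal.mul_ne_top (by simp) hb)]
  simp only [ENNReal.toReal_mul]
  rw [ENNReal.toReal_add h5a h2b]
  simp only [ENNReal.toReal_mul, ENNReal.toReal_ofNat,
    ENNReal.toReal_ofReal (by norm_num : (0:ℝ) ≤ 6/7),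
    ENNReal.toReal_ofReal (by norm_num : (0:ℝ) ≤ 2/7),
    ENNReal.toReal_ofReal (by norm_num : (0:ℝ) ≤ 1/6)]
  ring

theorem stmt_17 (T : ℝ → ℝ)
    (hT : ∀ x : ℝ, T x =
      if x < 1 / 6 then 6 * x
      else if x < 2 / 6 then 6 * x - 1
      else if x < 3 / 6 then 6 * x - 2
      else if x < 4 / 6 then 6 * x - 3
      else if x < 3 / 4 then 6 * x - 4
      else if x < 11 / 12 then 6 * x - 9 / 2
      else 6 * x - 11 / 2)
    (f : ℝ → ℝ≥0∞)
    (hf : ∀ x, f x = ENNReal.ofReal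
      ((6 / 7) * (1 + (1 / 3) *
        Set.indicator (Set.Ico (0 : ℝ) (1 / 2)) (fun _ => (1 : ℝ)) x)))
    (A : Set ℝ) (hA : MeasurableSet A) (hA1 : A ⊆ Set.Ico (0 : ℝ) 1) :
    ((volume.restrict (Set.Ico (0 : ℝ) 1)).withDensity f) (T ⁻¹' A)
      = ((volume.restrict (Set.Ico (0 : ℝ) 1)).withDensity f) A := by
  have hTmeas : Measurable T := by
    have : T = fun x => if x < 1 / 6 then 6 * x
      else if x < 2 / 6 then 6 * x - 1
      else if x < 3 / 6 then 6 * x - 2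
      else if x < 4 / 6 then 6 * x - 3
      else if x < 3 / 4 then 6 * x - 4
      else if x < 11 / 12 then 6 * x - 9 / 2
      else 6 * x - 11 / 2 := funext hT
    rw [this]
    have mlin : ∀ c : ℝ, Measurable (fun x : ℝ => 6 * x - c) :=
      fun c => (measurable_const.mul measurable_id).sub measurable_const
    have hset : ∀ c : ℝ, MeasurableSet {x : ℝ | x < c} :=
      fun c => measurableSet_lt measurable_id measurable_const
    exact Measurable.ite (hset _) (measurable_const.mul measurable_id)
      (Measurable.ite (hset _) (mlin 1) (Measurable.ite (hset _) (mlin 2)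
      (Measurable.ite (hset _) (mlin 3) (Measurable.ite (hset _) (mlin 4)
      (Measurable.ite (hset _) (mlin (9/2)) (mlin (11/2)))))))
  have hTA : MeasurableSet (T ⁻¹' A) := hTmeas hA
  have hIco : A ∩ Set.Ico (0:ℝ) 1 = A := Set.inter_eq_left.2 hA1
  have ha : volume A ≠ ⊤ :=
    ne_top_of_le_ne_top (by simp [Real.volume_Ico]) (measure_mono hA1)
  have hb : volume (A ∩ Set.Ico (0:ℝ) (1/2)) ≠ ⊤ :=
    ne_top_of_le_ne_top ha (measure_mono Set.inter_subset_left)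
  have hb0 : volume (T ⁻¹' A ∩ Set.Ico (0:ℝ) (1/6))
      = ENNReal.ofReal (1/6) * volume A := by
    rw [branch_vol (e := 0) (fun x h1 h2 => by rw [hT x, if_pos h2]; ring)]
    norm_num [hIco]
  have hb1 : volume (T ⁻¹' A ∩ Set.Ico (1/6:ℝ) (2/6))
      = ENNReal.ofReal (1/6) * volume A := by
    rw [branch_vol (e := 1) (fun x h1 h2 => by
      rw [hT x, if_neg (not_lt.2 (by linarith)), if_pos h2])]
    norm_num [hIco]
  have hb2 : volume (T ⁻¹' A ∩ Set.Ico (2/6:ℝ) (1/2))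
      = ENNReal.ofReal (1/6) * volume A := by
    rw [branch_vol (e := 2) (fun x h1 h2 => by
      rw [hT x, if_neg (not_lt.2 (by linarith)), if_neg (not_lt.2 (by linarith)),
        if_pos (by linarith)])]
    norm_num [hIco]
  have hb3 : volume (T ⁻¹' A ∩ Set.Ico (1/2:ℝ) (4/6))
      = ENNReal.ofReal (1/6) * volume A := by
    rw [branch_vol (e := 3) (fun x h1 h2 => by
      rw [hT x, if_neg (not_lt.2 (by linarith)), if_neg (not_lt.2 (by linarith)),
        if_neg (not_lt.2 (by linarith)), if_pos h2])]
    norm_num [hIco]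
  have hb4 : volume (T ⁻¹' A ∩ Set.Ico (4/6:ℝ) (3/4))
      = ENNReal.ofReal (1/6) * volume (A ∩ Set.Ico (0:ℝ) (1/2)) := by
    rw [branch_vol (e := 4) (fun x h1 h2 => by
      rw [hT x, if_neg (not_lt.2 (by linarith)), if_neg (not_lt.2 (by linarith)),
        if_neg (not_lt.2 (by linarith)), if_neg (not_lt.2 (by linarith)), if_pos h2])]
    norm_num
  have hb5 : volume (T ⁻¹' A ∩ Set.Ico (3/4:ℝ) (11/12))
      = ENNReal.ofReal (1/6) * volume A := by
    rw [branch_vol (e := 9/2) (fun x h1 h2 => by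
      rw [hT x, if_neg (not_lt.2 (by linarith)), if_neg (not_lt.2 (by linarith)),
        if_neg (not_lt.2 (by linarith)), if_neg (not_lt.2 (by linarith)),
        if_neg (not_lt.2 (by linarith)), if_pos h2])]
    norm_num [hIco]
  have hb6 : volume (T ⁻¹' A ∩ Set.Ico (11/12:ℝ) 1)
      = ENNReal.ofReal (1/6) * volume (A ∩ Set.Ico (0:ℝ) (1/2)) := by
    rw [branch_vol (e := 11/2) (fun x h1 h2 => by
      rw [hT x, if_neg (not_lt.2 (by linarith)), if_neg (not_lt.2 (by linarith)),
        if_neg (not_lt.2 (by linarith)), if_neg (not_lt.2 (by linarith)),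
        if_neg (not_lt.2 (by linarith)), if_neg (not_lt.2 (by linarith))])]
    norm_num
  have e1 : volume (T ⁻¹' A ∩ Set.Ico (0:ℝ) 1)
      = ENNReal.ofReal (1/6) * (5 * volume A + 2 * volume (A ∩ Set.Ico (0:ℝ) (1/2))) := by
    rw [vol_split _ hTA (a := 0) (b := 1/6) (c := 1) (by norm_num) (by norm_num),
      vol_split _ hTA (a := 1/6) (b := 2/6) (c := 1) (by norm_num) (by norm_num),
      vol_split _ hTA (a := 2/6) (b := 1/2) (c := 1) (by norm_num) (by norm_num),
      vol_split _ hTA (a := 1/2) (b := 4/6) (c := 1) (by norm_num) (by norm_num),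
      vol_split _ hTA (a := 4/6) (b := 3/4) (c := 1) (by norm_num) (by norm_num),
      vol_split _ hTA (a := 3/4) (b := 11/12) (c := 1) (by norm_num) (by norm_num),
      hb0, hb1, hb2, hb3, hb4, hb5, hb6]
    ring
  have e2 : volume (T ⁻¹' A ∩ Set.Ico (0:ℝ) (1/2))
      = ENNReal.ofReal (1/6) * (3 * volume A) := by
    rw [vol_split _ hTA (a := 0) (b := 1/6) (c := 1/2) (by norm_num) (by norm_num),
      vol_split _ hTA (a := 1/6) (b := 2/6) (c := 1/2) (by norm_num) (by norm_num),
      hb0, hb1, hb2]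
    ring
  rw [mu_eq f hf _ hTA, mu_eq f hf _ hA, e1, e2, hIco]
  exact arith _ _ ha hb
end
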